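/- arXiv:0807.3265 — 3 statements merged into one kernel-verified Lean document; each statement's English description precedes it below -/
import Mathlib

section
/- Let b < 0, c > 0, and let h : [0, z₀) → ℝ be continuously differentiable with h(0) > 0 and satisfying x·h'(x) + x·h(x)² + c·h(x) + b(1-b)/(1-x)² = 0 for all x ∈ [0, z₀), where z₀ ∈ (0,1]. Then h(x) > 0 for all x ∈ [0, z₀). -/
/-! If `h` had a zero in `(0, z₀)`, then at its first zero `x₀` the equation reduces to
`x₀ h'(x₀) = -b(1-b)/(1-x₀)² > 0`, so `h` would be increasing through `0` at `x₀` and hence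
negative just to the left of `x₀`, producing an earlier zero. -/

open Set Filter Topology

theorem HasDerivAt.eventually_nhdsLT_lt {f : ℝ → ℝ} {f' x : ℝ} (hf : HasDerivAt f f' x)
    (hf' : 0 < f') : ∀ᶠ y in 𝓝[<] x, f y < f x := by
  have hslope := (hasDerivAt_iff_tendsto_slope.mp hf).mono_left (nhdsLT_le_nhdsNE x)
  filter_upwards [hslope.eventually (eventually_gt_nhds hf'), self_mem_nhdsWithin]
    with y hpos (hyx : y < x)
  rw [slope_def_field, div_pos_iff] at hpos
  rcases hpos with ⟨-, hxy⟩ | ⟨hfyx, -⟩ <;> linarith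

theorem pos_on_Ico_of_deriv_pos_at_zeros {f f' : ℝ → ℝ} {a b : ℝ}
    (hderiv : ∀ x ∈ Ico a b, HasDerivAt f (f' x) x) (ha : 0 < f a)
    (hzero : ∀ x ∈ Ioo a b, f x = 0 → 0 < f' x) : ∀ x ∈ Ico a b, 0 < f x := by
  intro y hy
  by_contra! hy0
  have hcont : ContinuousOn f (Icc a y) := fun x hx =>
    (hderiv x ⟨hx.1, hx.2.trans_lt hy.2⟩).continuousAt.continuousWithinAt
  set Z := Icc a y ∩ f ⁻¹' {0}
  have hZ : IsCompact Z := isCompact_Icc.of_isClosed_subset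
    (hcont.preimage_isClosed_of_isClosed isClosed_Icc isClosed_singleton) inter_subset_left
  obtain ⟨s, hs, hfs⟩ := intermediate_value_Icc' hy.1 hcont ⟨hy0, ha.le⟩
  have hx₀ : sInf Z ∈ Z := hZ.sInf_mem ⟨s, hs, hfs⟩
  set x₀ := sInf Z
  have hax₀ : a < x₀ := hx₀.1.1.lt_of_ne fun h => ha.ne' (h ▸ hx₀.2)
  have hmem : x₀ ∈ Ico a b := ⟨hax₀.le, hx₀.1.2.trans_lt hy.2⟩
  obtain ⟨t, hft, hat, htx₀⟩ : ∃ t, f t < 0 ∧ a < t ∧ t < x₀ := by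
    have hlt := (hderiv x₀ hmem).eventually_nhdsLT_lt
      (hzero x₀ ⟨hax₀, hmem.2⟩ hx₀.2)
    simp only [show f x₀ = 0 from hx₀.2] at hlt
    exact (hlt.and (Ioo_mem_nhdsLT hax₀)).exists
  obtain ⟨s, hs, hfs⟩ := intermediate_value_Icc' hat.le
    (hcont.mono (Icc_subset_Icc_right (htx₀.le.trans hx₀.1.2))) ⟨hft.le, ha.le⟩
  have : x₀ ≤ s := csInf_le hZ.bddBelow ⟨⟨hs.1, hs.2.trans (htx₀.le.trans hx₀.1.2)⟩, hfs⟩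
  linarith [hs.2]

theorem stmt4_general (b c z₀ : ℝ) (hb : b < 0) (hz₀ : z₀ ∈ Set.Ioc (0:ℝ) 1)
    (h h' : ℝ → ℝ)
    (hderiv : ∀ x ∈ Set.Ico (0:ℝ) z₀, HasDerivAt h (h' x) x)
    (h0 : 0 < h 0)
    (hODE : ∀ x ∈ Set.Ico (0:ℝ) z₀,
      x * h' x + x * (h x) ^ 2 + c * h x + b * (1 - b) / (1 - x) ^ 2 = 0) :
    ∀ x ∈ Set.Ico (0:ℝ) z₀, 0 < h x := by
  refine pos_on_Ico_of_deriv_pos_at_zeros hderiv h0 fun x hx hhx => ?_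
  have hode := hODE x (Ioo_subset_Ico_self hx)
  rw [hhx] at hode
  have hforce : b * (1 - b) / (1 - x) ^ 2 < 0 :=
    div_neg_of_neg_of_pos (mul_neg_of_neg_of_pos hb (by linarith))
      (pow_pos (by linarith [hx.2, hz₀.2]) 2)
  have : 0 < x * h' x := by linarith
  exact pos_of_mul_pos_right this hx.1.le

/-- If `b < 0`, `c > 0`, `h` is continuously differentiable on `[0,z₀)` with
`h 0 > 0` and satisfies `x h'(x) + x h(x)² + c h(x) + b(1-b)/(1-x)² = 0` on `[0,z₀)`,
where `z₀ ∈ (0,1]`, then `h > 0` on `[0,z₀)`. -/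
theorem stmt4 (b c z₀ : ℝ) (hb : b < 0) (hc : 0 < c) (hz₀ : z₀ ∈ Set.Ioc (0:ℝ) 1)
    (h h' : ℝ → ℝ)
    (hderiv : ∀ x ∈ Set.Ico (0:ℝ) z₀, HasDerivAt h (h' x) x)
    (hcont : ContinuousOn h' (Set.Ico (0:ℝ) z₀))
    (h0 : 0 < h 0)
    (hODE : ∀ x ∈ Set.Ico (0:ℝ) z₀,
      x * h' x + x * (h x) ^ 2 + c * h x + b * (1 - b) / (1 - x) ^ 2 = 0) :
    ∀ x ∈ Set.Ico (0:ℝ) z₀, 0 < h x :=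
  stmt4_general b c z₀ hb hz₀ h h' hderiv h0 hODE
end

section
/- Let κ ∈ (0,4) and ρ ≥ (κ-4)/2, and let U₀(x) = ₂F₁(2ρ/κ, 1-4/κ; (2ρ+4)/κ; x) for x ∈ [0,1). Then U₀ has no zero on [0,1), U₀(x) > 0 on [0,1), and there exist constants C₂ > C₁ > 0 such that C₁ ≤ U₀(x) ≤ C₂ for all x ∈ [0,1). -/
noncomputable section

/-- The rising factorial (Pochhammer symbol) `(x)ₙ = x(x+1)⋯(x+n-1)`. -/
def ascPoch (x : ℝ) (n : ℕ) : ℝ := ∏ i ∈ Finset.range n, (x + i)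

/-- The Gauss hypergeometric function `₂F₁(a,b;c;x)`, defined by its power series. -/
def hyp2F1 (a b c x : ℝ) : ℝ :=
  ∑' n : ℕ, ascPoch a n * ascPoch b n / (ascPoch c n * (n.factorial : ℝ)) * x ^ n

/-!
Euler's transformation `₂F₁(a,b;c;x) · ₂F₁(c-a-b,1;1;x) = ₂F₁(c-a,c-b;c;x)`, where
`₂F₁(s,1;1;x) = (1-x)^{-s}`, is on the level of coefficients the Pfaff–Saalschütz identity, proved
here by a WZ telescoping. For `c, c-a, c-b, c-a-b > 0` both series on the right have positive
coefficients, and the ratio of their `n`-th coefficients changes at each step by the factor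
`1 + ab/((c+n)(c-a-b+n))`, whose infinite product converges. So the two series are within a constant
factor of each other on `[0,1)`, and `₂F₁(a,b;c;x)`, their quotient, is bounded above and below by
positive constants.
-/

open Filter Topology Finset

lemma ascPoch_zero (x : ℝ) : ascPoch x 0 = 1 := prod_range_zero _

lemma ascPoch_succ (x : ℝ) (n : ℕ) : ascPoch x (n + 1) = ascPoch x n * (x + n) :=
  prod_range_succ _ _

lemma ascPoch_pos {x : ℝ} (hx : 0 < x) (n : ℕ) : 0 < ascPoch x n :=
  prod_pos fun i _ => by positivity

def hyp2F1Coeff (a b c : ℝ) (n : ℕ) : ℝ :=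
  ascPoch a n * ascPoch b n / (ascPoch c n * (n.factorial : ℝ))

lemma hyp2F1_eq_tsum (a b c x : ℝ) : hyp2F1 a b c x = ∑' n, hyp2F1Coeff a b c n * x ^ n := rfl

@[simp]
lemma hyp2F1Coeff_zero (a b c : ℝ) : hyp2F1Coeff a b c 0 = 1 := by
  simp [hyp2F1Coeff, ascPoch_zero]

lemma hyp2F1Coeff_pos {a b c : ℝ} (ha : 0 < a) (hb : 0 < b) (hc : 0 < c) (n : ℕ) :
    0 < hyp2F1Coeff a b c n := by
  have := ascPoch_pos ha n; have := ascPoch_pos hb n; have := ascPoch_pos hc n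
  unfold hyp2F1Coeff; positivity

lemma hyp2F1Coeff_succ {c : ℝ} (hc : 0 < c) (a b : ℝ) (n : ℕ) :
    hyp2F1Coeff a b c (n + 1) = (a + n) * (b + n) / ((n + 1) * (c + n)) * hyp2F1Coeff a b c n := by
  have := ascPoch_pos hc n
  unfold hyp2F1Coeff
  rw [ascPoch_succ, ascPoch_succ, ascPoch_succ, Nat.factorial_succ]
  push_cast
  field_simp

lemma succ_mul_hyp2F1Coeff_succ {c : ℝ} (hc : 0 < c) (a b : ℝ) (n : ℕ) :
    ((n + 1) * (c + n)) * hyp2F1Coeff a b c (n + 1) =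
      ((a + n) * (b + n)) * hyp2F1Coeff a b c n := by
  rw [hyp2F1Coeff_succ hc]
  field_simp

lemma succ_mul_hyp2F1Coeff_one_one_succ (s : ℝ) (n : ℕ) :
    (n + 1) * hyp2F1Coeff s 1 1 (n + 1) = (s + n) * hyp2F1Coeff s 1 1 n := by
  rw [hyp2F1Coeff_succ one_pos]
  field_simp

lemma summable_of_norm_succ_le {E : Type*} [NormedAddCommGroup E] [CompleteSpace E] {f : ℕ → E}
    {r : ℕ → ℝ} {q : ℝ} (hq : q < 1) (hr : Tendsto r atTop (𝓝 q))
    (hf : ∀ n, ‖f (n + 1)‖ ≤ r n * ‖f n‖) : Summable f := by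
  obtain ⟨q', hqq', hq'⟩ := exists_between hq
  refine summable_of_ratio_norm_eventually_le hq' ?_
  filter_upwards [hr.eventually_lt_const hqq'] with n hn
  exact (hf n).trans (mul_le_mul_of_nonneg_right hn.le (norm_nonneg _))

lemma summable_hyp2F1Coeff_mul_pow {c : ℝ} (hc : 0 < c) (a b : ℝ) {x : ℝ} (hx : |x| < 1) :
    Summable fun n => hyp2F1Coeff a b c n * x ^ n := by
  have hratio : Tendsto (fun n : ℕ => (a + n) * (b + n) / ((n + 1) * (c + n))) atTop (𝓝 1) := by
    have h := (tendsto_add_mul_div_add_mul_atTop_nhds a 1 1 one_ne_zero).mul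
      (tendsto_add_mul_div_add_mul_atTop_nhds b c 1 one_ne_zero)
    simp only [one_mul, div_one, mul_one] at h
    refine h.congr fun n => ?_
    rw [div_mul_div_comm, add_comm 1 (n : ℝ)]
  refine summable_of_norm_succ_le hx (by simpa using hratio.abs.mul_const |x|) fun n => le_of_eq ?_
  rw [hyp2F1Coeff_succ hc, pow_succ]
  simp only [Real.norm_eq_abs, abs_mul, abs_pow]
  ring

lemma summable_norm_hyp2F1Coeff_mul_pow {c : ℝ} (hc : 0 < c) (a b : ℝ) {x : ℝ} (hx : |x| < 1) :
    Summable fun n => ‖hyp2F1Coeff a b c n * x ^ n‖ :=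
  (summable_hyp2F1Coeff_mul_pow hc a b hx).norm

section Saalschutz

variable {a b c : ℝ}

-- The WZ pair `F(n,k) = A_k B_{n-k}`, `G(n,k) = k(k-1+c) A_k B_{n+1-k}` at `n = j + k`, where
-- `A = hyp2F1Coeff a b c` and `B = hyp2F1Coeff (c - a - b) 1 1`.
lemma hyp2F1Coeff_wz_identity (hc : 0 < c) (k j : ℕ) :
    (((j + k : ℝ) + 1) * ((j + k : ℝ) + c)) *
        (hyp2F1Coeff a b c k * hyp2F1Coeff (c - a - b) 1 1 (j + 1))
      - (((j + k : ℝ) + c - a) * ((j + k : ℝ) + c - b)) *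
          (hyp2F1Coeff a b c k * hyp2F1Coeff (c - a - b) 1 1 j)
    = (k * (k - 1 + c)) * (hyp2F1Coeff a b c k * hyp2F1Coeff (c - a - b) 1 1 (j + 1))
      - ((k + 1) * (k + c)) * (hyp2F1Coeff a b c (k + 1) * hyp2F1Coeff (c - a - b) 1 1 j) := by
  linear_combination ((j : ℝ) + 2 * k + c) * hyp2F1Coeff a b c k *
      succ_mul_hyp2F1Coeff_one_one_succ (c - a - b) j
    + hyp2F1Coeff (c - a - b) 1 1 j * succ_mul_hyp2F1Coeff_succ hc a b k

lemma hyp2F1Coeff_convolution_recurrence (hc : 0 < c) (n : ℕ) :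
    (((n : ℝ) + 1) * (n + c)) *
        ∑ k ∈ range (n + 2), hyp2F1Coeff a b c k * hyp2F1Coeff (c - a - b) 1 1 (n + 1 - k)
      = (((n : ℝ) + c - a) * (n + c - b)) *
        ∑ k ∈ range (n + 1), hyp2F1Coeff a b c k * hyp2F1Coeff (c - a - b) 1 1 (n - k) := by
  set G : ℕ → ℝ := fun k =>
    (k * (k - 1 + c)) * (hyp2F1Coeff a b c k * hyp2F1Coeff (c - a - b) 1 1 (n + 1 - k))
  have hterm : ∀ k ∈ range (n + 1),
      (((n : ℝ) + 1) * (n + c)) * (hyp2F1Coeff a b c k * hyp2F1Coeff (c - a - b) 1 1 (n + 1 - k))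
        - (((n : ℝ) + c - a) * (n + c - b)) *
            (hyp2F1Coeff a b c k * hyp2F1Coeff (c - a - b) 1 1 (n - k))
      = G k - G (k + 1) := by
    intro k hk
    obtain ⟨j, rfl⟩ := Nat.exists_eq_add_of_le' (Nat.lt_succ_iff.mp (mem_range.mp hk))
    simp only [G, show j + k + 1 - k = j + 1 by omega, show j + k - k = j by omega,
      show j + k + 1 - (k + 1) = j by omega]
    push_cast
    linear_combination hyp2F1Coeff_wz_identity (a := a) (b := b) hc k j
  have htelescope := (sum_congr rfl hterm).trans (sum_range_sub' G (n + 1))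
  rw [sum_sub_distrib, ← mul_sum, ← mul_sum] at htelescope
  rw [sum_range_succ]
  simp only [G, Nat.sub_self, CharP.cast_eq_zero] at htelescope ⊢
  push_cast at htelescope
  linear_combination htelescope

lemma sum_range_hyp2F1Coeff_mul_hyp2F1Coeff_one_one (hc : 0 < c) (n : ℕ) :
    ∑ k ∈ range (n + 1), hyp2F1Coeff a b c k * hyp2F1Coeff (c - a - b) 1 1 (n - k)
      = hyp2F1Coeff (c - a) (c - b) c n := by
  induction n with
  | zero => simp
  | succ n ih =>
    apply mul_left_cancel₀ (show ((n : ℝ) + 1) * (n + c) ≠ 0 by positivity)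
    rw [hyp2F1Coeff_convolution_recurrence hc, ih]
    linear_combination -succ_mul_hyp2F1Coeff_succ hc (c - a) (c - b) n

end Saalschutz

lemma hyp2F1_mul_hyp2F1_one_one {a b c x : ℝ} (hc : 0 < c) (hx : |x| < 1) :
    hyp2F1 a b c x * hyp2F1 (c - a - b) 1 1 x = hyp2F1 (c - a) (c - b) c x := by
  rw [hyp2F1_eq_tsum, hyp2F1_eq_tsum, hyp2F1_eq_tsum,
    tsum_mul_tsum_eq_tsum_sum_range_of_summable_norm (summable_norm_hyp2F1Coeff_mul_pow hc a b hx)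
      (summable_norm_hyp2F1Coeff_mul_pow one_pos _ _ hx)]
  refine tsum_congr fun n => ?_
  rw [← sum_range_hyp2F1Coeff_mul_hyp2F1Coeff_one_one hc, sum_mul]
  refine sum_congr rfl fun k hk => ?_
  rw [← pow_mul_pow_sub x (Nat.lt_succ_iff.mp (mem_range.mp hk))]
  ring

lemma add_le_exp_abs_div_mul {P δ : ℝ} (hδ : 0 < δ) (hP : δ ≤ P) (t : ℝ) :
    P + t ≤ Real.exp (|t| / δ) * P := by
  have hP₀ : 0 < P := hδ.trans_le hP
  calc P + t ≤ (1 + |t| / P) * P := by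
        rw [add_mul, one_mul, div_mul_cancel₀ _ hP₀.ne']; linarith [le_abs_self t]
    _ ≤ (1 + |t| / δ) * P := by gcongr
    _ ≤ Real.exp (|t| / δ) * P := by gcongr; linarith [Real.add_one_le_exp (|t| / δ)]

lemma le_exp_tsum_mul_of_succ_mul_le {u v w : ℕ → ℝ} (hv : ∀ n, 0 < v n) (hw₀ : ∀ n, 0 ≤ w n)
    (hw : Summable w) (h₀ : u 0 ≤ v 0)
    (h : ∀ n, u (n + 1) * v n ≤ Real.exp (w n) * (v (n + 1) * u n)) (n : ℕ) :
    u n ≤ Real.exp (∑' k, w k) * v n := by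
  have hpartial : ∀ n, u n ≤ Real.exp (∑ k ∈ range n, w k) * v n := by
    intro n
    induction n with
    | zero => simpa using h₀
    | succ n ih =>
      refine le_of_mul_le_mul_right ?_ (hv n)
      calc u (n + 1) * v n ≤ Real.exp (w n) * (v (n + 1) * u n) := h n
        _ ≤ Real.exp (w n) * (v (n + 1) * (Real.exp (∑ k ∈ range n, w k) * v n)) := by
          gcongr; exact (hv _).le
        _ = Real.exp (∑ k ∈ range (n + 1), w k) * v (n + 1) * v n := by
          rw [sum_range_succ, Real.exp_add]; ring
  calc u n ≤ Real.exp (∑ k ∈ range n, w k) * v n := hpartial n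
    _ ≤ Real.exp (∑' k, w k) * v n := by
      gcongr
      · exact (hv n).le
      · exact hw.sum_le_tsum _ fun k _ => hw₀ k

lemma exists_hyp2F1Coeff_le_mul_and_le_mul {a b c : ℝ} (hc : 0 < c) (hca : 0 < c - a)
    (hcb : 0 < c - b) (hs : 0 < c - a - b) :
    ∃ C, 1 ≤ C ∧ ∀ n, hyp2F1Coeff (c - a) (c - b) c n ≤ C * hyp2F1Coeff (c - a - b) 1 1 n ∧
      hyp2F1Coeff (c - a - b) 1 1 n ≤ C * hyp2F1Coeff (c - a) (c - b) c n := by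
  set A := hyp2F1Coeff (c - a) (c - b) c
  set B := hyp2F1Coeff (c - a - b) 1 1
  set m := min (min c (c - a - b)) (min (c - a) (c - b))
  have hm : 0 < m := lt_min (lt_min hc hs) (lt_min hca hcb)
  set w : ℕ → ℝ := fun n => |a * b| / (n + m) ^ 2
  have hw₀ : ∀ n, 0 ≤ w n := fun n => by positivity
  have hnm : ∀ n : ℕ, 0 < (n : ℝ) + m := fun n => add_pos_of_nonneg_of_pos n.cast_nonneg hm
  have hw : Summable w := by
    refine ((Real.summable_one_div_nat_add_rpow m 2).mpr one_lt_two).mul_left |a * b| |>.congr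
      fun n => ?_
    rw [abs_of_pos (hnm n), Real.rpow_two, mul_one_div]
  -- `(c - a + n)(c - b + n) = (c + n)(c - a - b + n) + ab`, and both products are `≥ (n + m)²`
  have hfactor : ∀ n : ℕ,
      (c - a + n) * (c - b + n) ≤ Real.exp (w n) * ((c + n) * (c - a - b + n)) ∧
      (c + n) * (c - a - b + n) ≤ Real.exp (w n) * ((c - a + n) * (c - b + n)) := by
    intro n
    have hle : ∀ {p q : ℝ}, m ≤ p → m ≤ q → ((n : ℝ) + m) ^ 2 ≤ (p + n) * (q + n) :=
      fun hp hq => by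
        rw [sq]; exact mul_le_mul (by linarith) (by linarith) (hnm n).le (by linarith [hnm n])
    have hmc : m ≤ c := (min_le_left _ _).trans (min_le_left _ _)
    have hms : m ≤ c - a - b := (min_le_left _ _).trans (min_le_right _ _)
    have hmca : m ≤ c - a := (min_le_right _ _).trans (min_le_left _ _)
    have hmcb : m ≤ c - b := (min_le_right _ _).trans (min_le_right _ _)
    constructor
    · convert add_le_exp_abs_div_mul (pow_pos (hnm n) 2) (hle hmc hms) (a * b) using 1; ring
    · convert add_le_exp_abs_div_mul (pow_pos (hnm n) 2) (hle hmca hmcb) (-(a * b)) using 1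
      · ring
      · rw [abs_neg]
  have hA : ∀ n, 0 < A n := hyp2F1Coeff_pos hca hcb hc
  have hB : ∀ n, 0 < B n := hyp2F1Coeff_pos hs one_pos one_pos
  have hD : ∀ n : ℕ, 0 < ((n : ℝ) + 1) * (c + n) := fun n => by positivity
  have hAB : ∀ n : ℕ, (((n : ℝ) + 1) * (c + n)) * (A (n + 1) * B n)
      = ((c - a + n) * (c - b + n)) * (A n * B n) := fun n => by
    linear_combination B n * succ_mul_hyp2F1Coeff_succ hc (c - a) (c - b) n
  have hBA : ∀ n : ℕ, (((n : ℝ) + 1) * (c + n)) * (B (n + 1) * A n)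
      = ((c + n) * (c - a - b + n)) * (A n * B n) := fun n => by
    linear_combination (c + n) * A n * succ_mul_hyp2F1Coeff_one_one_succ (c - a - b) n
  have hAB₀ : ∀ n, 0 ≤ A n * B n := fun n => (mul_pos (hA n) (hB n)).le
  refine ⟨Real.exp (∑' n, w n), Real.one_le_exp (tsum_nonneg hw₀), fun n => ⟨?_, ?_⟩⟩
  · refine le_exp_tsum_mul_of_succ_mul_le hB hw₀ hw (by simp [A, B]) (fun n => ?_) n
    refine le_of_mul_le_mul_left ?_ (hD n)
    calc _ = ((c - a + n) * (c - b + n)) * (A n * B n) := hAB n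
      _ ≤ (Real.exp (w n) * ((c + n) * (c - a - b + n))) * (A n * B n) :=
        mul_le_mul_of_nonneg_right (hfactor n).1 (hAB₀ n)
      _ = _ := by linear_combination -Real.exp (w n) * hBA n
  · refine le_exp_tsum_mul_of_succ_mul_le hA hw₀ hw (by simp [A, B]) (fun n => ?_) n
    refine le_of_mul_le_mul_left ?_ (hD n)
    calc _ = ((c + n) * (c - a - b + n)) * (A n * B n) := hBA n
      _ ≤ (Real.exp (w n) * ((c - a + n) * (c - b + n))) * (A n * B n) :=
        mul_le_mul_of_nonneg_right (hfactor n).2 (hAB₀ n)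
      _ = _ := by linear_combination -Real.exp (w n) * hAB n

lemma tsum_mul_pow_le_mul_tsum {p q : ℕ → ℝ} {C x : ℝ} (hx : 0 ≤ x)
    (hp : Summable fun n => p n * x ^ n) (hq : Summable fun n => q n * x ^ n)
    (h : ∀ n, p n ≤ C * q n) : ∑' n, p n * x ^ n ≤ C * ∑' n, q n * x ^ n := by
  rw [← tsum_mul_left]
  refine hp.tsum_le_tsum (fun n => ?_) (hq.mul_left C)
  rw [← mul_assoc]
  exact mul_le_mul_of_nonneg_right (h n) (pow_nonneg hx n)

lemma one_le_hyp2F1 {a b c x : ℝ} (ha : 0 < a) (hb : 0 < b) (hc : 0 < c) (hx₀ : 0 ≤ x)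
    (hx₁ : x < 1) : 1 ≤ hyp2F1 a b c x := by
  have hsum := summable_hyp2F1Coeff_mul_pow hc a b (x := x) (by rwa [abs_of_nonneg hx₀])
  rw [hyp2F1_eq_tsum]
  simpa using hsum.le_tsum 0 fun n _ =>
    mul_nonneg (hyp2F1Coeff_pos ha hb hc n).le (pow_nonneg hx₀ n)

lemma exists_inv_le_hyp2F1_le {a b c : ℝ} (hc : 0 < c) (hca : 0 < c - a) (hcb : 0 < c - b)
    (hs : 0 < c - a - b) :
    ∃ C, 1 ≤ C ∧ ∀ x ∈ Set.Ico (0 : ℝ) 1, C⁻¹ ≤ hyp2F1 a b c x ∧ hyp2F1 a b c x ≤ C := by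
  obtain ⟨C, hC, hcoeff⟩ := exists_hyp2F1Coeff_le_mul_and_le_mul hc hca hcb hs
  refine ⟨C, hC, fun x ⟨hx₀, hx₁⟩ => ?_⟩
  have hx : |x| < 1 := by rwa [abs_of_nonneg hx₀]
  have hB : 1 ≤ hyp2F1 (c - a - b) 1 1 x := one_le_hyp2F1 hs one_pos one_pos hx₀ hx₁
  have hF := hyp2F1_mul_hyp2F1_one_one (a := a) (b := b) hc hx
  have hupper : hyp2F1 (c - a) (c - b) c x ≤ C * hyp2F1 (c - a - b) 1 1 x :=
    tsum_mul_pow_le_mul_tsum hx₀ (summable_hyp2F1Coeff_mul_pow hc _ _ hx)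
      (summable_hyp2F1Coeff_mul_pow one_pos _ _ hx) fun n => (hcoeff n).1
  have hlower : hyp2F1 (c - a - b) 1 1 x ≤ C * hyp2F1 (c - a) (c - b) c x :=
    tsum_mul_pow_le_mul_tsum hx₀ (summable_hyp2F1Coeff_mul_pow one_pos _ _ hx)
      (summable_hyp2F1Coeff_mul_pow hc _ _ hx) fun n => (hcoeff n).2
  have hC₀ : 0 < C := one_pos.trans_le hC
  have hB₀ : 0 < hyp2F1 (c - a - b) 1 1 x := one_pos.trans_le hB
  constructor
  · rw [inv_le_iff_one_le_mul₀' hC₀]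
    refine le_of_mul_le_mul_right ?_ hB₀
    rwa [one_mul, mul_assoc, hF]
  · exact le_of_mul_le_mul_right (by rwa [hF]) hB₀

/-- For `κ ∈ (0,4)` and `ρ ≥ (κ-4)/2`, the function
`U₀(x) = ₂F₁(2ρ/κ, 1-4/κ; (2ρ+4)/κ; x)` has no zero on `[0,1)`, is positive on `[0,1)`,
and is bounded between two positive constants `C₁ ≤ U₀ ≤ C₂` on `[0,1)`. -/
theorem stmt5 (κ ρ : ℝ) (hκ0 : 0 < κ) (hκ4 : κ < 4) (hρ : (κ - 4) / 2 ≤ ρ)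
    (U₀ : ℝ → ℝ) (hU₀ : ∀ x, U₀ x = hyp2F1 (2 * ρ / κ) (1 - 4 / κ) ((2 * ρ + 4) / κ) x) :
    (∀ x ∈ Set.Ico (0:ℝ) 1, U₀ x ≠ 0) ∧ (∀ x ∈ Set.Ico (0:ℝ) 1, 0 < U₀ x) ∧
    ∃ C₁ C₂ : ℝ, 0 < C₁ ∧ C₁ < C₂ ∧ ∀ x ∈ Set.Ico (0:ℝ) 1, C₁ ≤ U₀ x ∧ U₀ x ≤ C₂ := by
  have hc : 0 < (2 * ρ + 4) / κ := div_pos (by linarith) hκ0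
  have hca : 0 < (2 * ρ + 4) / κ - 2 * ρ / κ := by
    rw [← sub_div]; exact div_pos (by linarith) hκ0
  have hcb : 0 < (2 * ρ + 4) / κ - (1 - 4 / κ) := by
    rw [show (2 * ρ + 4) / κ - (1 - 4 / κ) = (2 * ρ + 8 - κ) / κ by field_simp; ring]
    exact div_pos (by linarith) hκ0
  have hs : 0 < (2 * ρ + 4) / κ - 2 * ρ / κ - (1 - 4 / κ) := by
    rw [show (2 * ρ + 4) / κ - 2 * ρ / κ - (1 - 4 / κ) = (8 - κ) / κ by field_simp; ring]
    exact div_pos (by linarith) hκ0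
  obtain ⟨C, hC, hbound⟩ := exists_inv_le_hyp2F1_le hc hca hcb hs
  have hpos : ∀ x ∈ Set.Ico (0:ℝ) 1, 0 < U₀ x := fun x hx =>
    (hU₀ x).symm ▸ (inv_pos.mpr (one_pos.trans_le hC)).trans_le (hbound x hx).1
  refine ⟨fun x hx => (hpos x hx).ne', hpos, C⁻¹, C + 1, inv_pos.mpr (one_pos.trans_le hC),
    (inv_le_one_of_one_le₀ hC).trans_lt (by linarith), fun x hx => ?_⟩
  rw [hU₀]
  exact ⟨(hbound x hx).1, (hbound x hx).2.trans (by linarith)⟩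
end
end

section
/- Let κ ∈ (0,4), ρ ≥ (κ-4)/2, a = 2ρ/κ, b = 1-4/κ, c = (2ρ+4)/κ, and let U₀ be a positive solution of the hypergeometric equation x(x-1)U₀'' + [(a+b+1)x - c]U₀' + ab·U₀ = 0 on (0,1). Define V₀(x) = x^{ρ/κ}·U₀(x) and g₀(x) = ρ + κ·x·U₀'(x)/U₀(x). Then for all x ∈ (0,1), (κ/2)·(V₀''(x)/V₀(x))·x² = [(2 - κ/2)·(x+1)/(x-1) - κ/2]·(g₀(x)/κ) - ρ(κ-4-ρ)/(2κ). -/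
/-! Since `V₀ = x ^ p U₀`, the quotient `x ^ 2 * V₀'' / V₀` equals the Euler-type expression
`(x ^ 2 U₀'' + 2 p x U₀' + p (p - 1) U₀) / U₀` with `p = ρ / κ`. Eliminating `U₀''` with the
hypergeometric equation leaves a rational identity in `x`, `κ`, `ρ` and `U₀' / U₀`. -/

open Filter Topology

theorem deriv_rpow_mul_eventuallyEq {U : ℝ → ℝ} {p x : ℝ} (hx : 0 < x)
    (hU : ∀ᶠ y in 𝓝 x, DifferentiableAt ℝ U y) :
    deriv (fun y => y ^ p * U y) =ᶠ[𝓝 x] fun y => p * y ^ (p - 1) * U y + y ^ p * deriv U y := by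
  filter_upwards [hU, Ioi_mem_nhds hx] with y hUy hy
  exact ((Real.hasDerivAt_rpow_const (Or.inl hy.ne')).mul hUy.hasDerivAt).deriv

theorem sq_mul_deriv_deriv_rpow_mul {U : ℝ → ℝ} {p x : ℝ} (hx : 0 < x)
    (hU : ∀ᶠ y in 𝓝 x, DifferentiableAt ℝ U y) (hU' : DifferentiableAt ℝ (deriv U) x) :
    x ^ 2 * deriv (deriv fun y => y ^ p * U y) x
      = x ^ p * (x ^ 2 * deriv (deriv U) x + 2 * p * x * deriv U x + p * (p - 1) * U x) := by
  have hpow : ∀ q, HasDerivAt (fun y : ℝ => y ^ q) (q * x ^ (q - 1)) x :=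
    fun q => Real.hasDerivAt_rpow_const (Or.inl hx.ne')
  have hsecond : HasDerivAt (fun y => p * y ^ (p - 1) * U y + y ^ p * deriv U y) _ x :=
    (((hpow (p - 1)).const_mul p).mul hU.self_of_nhds.hasDerivAt).add
      ((hpow p).mul hU'.hasDerivAt)
  rw [(deriv_rpow_mul_eventuallyEq hx hU).deriv_eq, hsecond.deriv,
    Real.rpow_sub hx, Real.rpow_sub hx, Real.rpow_one]
  field_simp
  ring

theorem hypergeometric_euler_quotient_eq {κ ρ a b c x u u' u'' : ℝ} (hκ : κ ≠ 0)
    (ha : a = 2 * ρ / κ) (hb : b = 1 - 4 / κ) (hc : c = (2 * ρ + 4) / κ)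
    (hx0 : x ≠ 0) (hx1 : x ≠ 1) (hu : u ≠ 0)
    (hode : x * (x - 1) * u'' + ((a + b + 1) * x - c) * u' + a * b * u = 0) :
    (κ / 2) * ((x ^ 2 * u'' + 2 * (ρ / κ) * x * u' + ρ / κ * (ρ / κ - 1) * u) / u)
      = ((2 - κ / 2) * (x + 1) / (x - 1) - κ / 2) * ((ρ + κ * x * u' / u) / κ)
        - ρ * (κ - 4 - ρ) / (2 * κ) := by
  have hx1' : x - 1 ≠ 0 := sub_ne_zero.mpr hx1
  have hu'' : u'' = (-((a + b + 1) * x - c) * u' - a * b * u) / (x * (x - 1)) := by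
    field_simp
    linear_combination hode
  subst hu'' ha hb hc
  field_simp
  ring

theorem stmt10_general (κ ρ : ℝ) (hκ0 : 0 < κ)
    (a b c : ℝ) (ha : a = 2 * ρ / κ) (hb : b = 1 - 4 / κ) (hc : c = (2 * ρ + 4) / κ)
    (U₀ V₀ g₀ : ℝ → ℝ)
    (hU₀_smooth : ContDiffOn ℝ 2 U₀ (Set.Ioo (0:ℝ) 1))
    (hU₀_pos : ∀ x ∈ Set.Ioo (0:ℝ) 1, 0 < U₀ x)
    (hODE : ∀ x ∈ Set.Ioo (0:ℝ) 1,
      x * (x - 1) * deriv (deriv U₀) x + ((a + b + 1) * x - c) * deriv U₀ x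
        + a * b * U₀ x = 0)
    (hV₀ : ∀ x ∈ Set.Ioo (0:ℝ) 1, V₀ x = x ^ (ρ / κ) * U₀ x)
    (hg₀ : ∀ x ∈ Set.Ioo (0:ℝ) 1, g₀ x = ρ + κ * x * deriv U₀ x / U₀ x) :
    ∀ x ∈ Set.Ioo (0:ℝ) 1,
      (κ / 2) * (deriv (deriv V₀) x / V₀ x) * x ^ 2
        = ((2 - κ / 2) * (x + 1) / (x - 1) - κ / 2) * (g₀ x / κ)
          - ρ * (κ - 4 - ρ) / (2 * κ) := by
  intro x hx
  have hnhds : Set.Ioo (0:ℝ) 1 ∈ 𝓝 x := isOpen_Ioo.mem_nhds hx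
  have hU : ∀ᶠ y in 𝓝 x, DifferentiableAt ℝ U₀ y :=
    eventually_of_mem hnhds fun y hy =>
      (hU₀_smooth.differentiableOn two_ne_zero).differentiableAt (isOpen_Ioo.mem_nhds hy)
  have hU' : DifferentiableAt ℝ (deriv U₀) x :=
    ((hU₀_smooth.deriv_of_isOpen isOpen_Ioo one_add_one_eq_two.le).differentiableOn
      one_ne_zero).differentiableAt hnhds
  have hV : V₀ =ᶠ[𝓝 x] fun y => y ^ (ρ / κ) * U₀ y := eventually_of_mem hnhds hV₀
  have hxp : x ^ (ρ / κ) ≠ 0 := (Real.rpow_pos_of_pos hx.1 _).ne'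
  have hquot : deriv (deriv V₀) x / V₀ x * x ^ 2 = (x ^ 2 * deriv (deriv U₀) x
      + 2 * (ρ / κ) * x * deriv U₀ x + ρ / κ * (ρ / κ - 1) * U₀ x) / U₀ x := by
    rw [hV.deriv.deriv_eq, hV₀ x hx, div_mul_eq_mul_div, mul_comm _ (x ^ 2),
      sq_mul_deriv_deriv_rpow_mul hx.1 hU hU', mul_div_mul_left _ _ hxp]
  rw [mul_assoc, hquot, hg₀ x hx]
  exact hypergeometric_euler_quotient_eq hκ0.ne' ha hb hc hx.1.ne' hx.2.ne (hU₀_pos x hx).ne' (hODE x hx)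

/-- Let `κ ∈ (0,4)`, `ρ ≥ (κ-4)/2`, `a = 2ρ/κ`, `b = 1-4/κ`, `c = (2ρ+4)/κ`,
and let `U₀` be a positive twice continuously differentiable solution of the hypergeometric
equation on `(0,1)`. With `V₀(x) = x^(ρ/κ) U₀(x)` and `g₀(x) = ρ + κ x U₀'(x)/U₀(x)`,
for all `x ∈ (0,1)`:
`(κ/2)·(V₀''(x)/V₀(x))·x² = [(2-κ/2)(x+1)/(x-1) - κ/2]·(g₀(x)/κ) - ρ(κ-4-ρ)/(2κ)`. -/
theorem stmt10 (κ ρ : ℝ) (hκ0 : 0 < κ) (hκ4 : κ < 4) (hρ : (κ - 4) / 2 ≤ ρ)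
    (a b c : ℝ) (ha : a = 2 * ρ / κ) (hb : b = 1 - 4 / κ) (hc : c = (2 * ρ + 4) / κ)
    (U₀ V₀ g₀ : ℝ → ℝ)
    (hU₀_smooth : ContDiffOn ℝ 2 U₀ (Set.Ioo (0:ℝ) 1))
    (hU₀_pos : ∀ x ∈ Set.Ioo (0:ℝ) 1, 0 < U₀ x)
    (hODE : ∀ x ∈ Set.Ioo (0:ℝ) 1,
      x * (x - 1) * deriv (deriv U₀) x + ((a + b + 1) * x - c) * deriv U₀ x
        + a * b * U₀ x = 0)
    (hV₀ : ∀ x ∈ Set.Ioo (0:ℝ) 1, V₀ x = x ^ (ρ / κ) * U₀ x)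
    (hg₀ : ∀ x ∈ Set.Ioo (0:ℝ) 1, g₀ x = ρ + κ * x * deriv U₀ x / U₀ x) :
    ∀ x ∈ Set.Ioo (0:ℝ) 1,
      (κ / 2) * (deriv (deriv V₀) x / V₀ x) * x ^ 2
        = ((2 - κ / 2) * (x + 1) / (x - 1) - κ / 2) * (g₀ x / κ)
          - ρ * (κ - 4 - ρ) / (2 * κ) :=
  stmt10_general κ ρ hκ0 a b c ha hb hc U₀ V₀ g₀ hU₀_smooth hU₀_pos hODE hV₀ hg₀
end
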